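/- arXiv:2009.04979 — 3 statements merged into one kernel-verified Lean document; each statement's English description precedes it below -/
import Mathlib

section
/- Let f : 2^U → ℝ be nonnegative, monotone, and submodular on finite U, let k ≥ 1, and let A ⊆ U and O ⊆ U with |O| ≤ k. Suppose for every o ∈ O \ A we have f(A ∪ {o}) - f(A) ≤ f(A)/k. Then f(O) ≤ 2·f(A). -/
theorem small_marginals_imply_half {α : Type*} [Fintype α] [DecidableEq α]
    (f : Finset α → ℝ)
    (hnonneg : ∀ S : Finset α, 0 ≤ f S)
    (hmono : ∀ S T : Finset α, S ⊆ T → f S ≤ f T)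
    (hsub : ∀ S T : Finset α, ∀ u : α, S ⊆ T → u ∉ T →
      f (insert u T) - f T ≤ f (insert u S) - f S)
    (k : ℕ) (hk : 1 ≤ k) (A O : Finset α) (hO : O.card ≤ k)
    (hmarg : ∀ o ∈ O \ A, f (insert o A) - f A ≤ f A / k) :
    f O ≤ 2 * f A := by
  have key : ∀ S : Finset α, f (A ∪ S) ≤ f A + ∑ o ∈ S, (f (insert o A) - f A) := by
    intro S
    induction S using Finset.induction_on with
    | empty => simp
    | @insert u S hu ih =>
      rw [Finset.sum_insert hu]
      have hterm : (0:ℝ) ≤ f (insert u A) - f A :=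
        sub_nonneg.2 (hmono _ _ (Finset.subset_insert _ _))
      by_cases hmem : u ∈ A ∪ S
      · have : A ∪ insert u S = A ∪ S := by
          rw [Finset.union_insert, Finset.insert_eq_self.2 hmem]
        rw [this]; linarith
      · have h1 : f (insert u (A ∪ S)) - f (A ∪ S) ≤ f (insert u A) - f A :=
          hsub A (A ∪ S) u Finset.subset_union_left hmem
        rw [Finset.union_insert]
        linarith
  have h1 : f O ≤ f (A ∪ (O \ A)) := by
    apply hmono
    intro x hx
    by_cases hxA : x ∈ A <;> simp [hx, hxA]
  have h2 := key (O \ A)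
  have hcard : (O \ A).card ≤ k := le_trans (Finset.card_le_card (Finset.sdiff_subset)) hO
  have hsum : ∑ o ∈ O \ A, (f (insert o A) - f A) ≤ (O \ A).card * (f A / k) := by
    calc ∑ o ∈ O \ A, (f (insert o A) - f A) ≤ ∑ _o ∈ O \ A, (f A / k) :=
          Finset.sum_le_sum hmarg
      _ = (O \ A).card * (f A / k) := by simp [mul_comm]
  have hk' : (0:ℝ) < k := by exact_mod_cast hk
  have hfA := hnonneg A
  have : ((O \ A).card : ℝ) * (f A / k) ≤ f A := by
    calc ((O \ A).card : ℝ) * (f A / k) ≤ (k:ℝ) * (f A / k) := by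
          apply mul_le_mul_of_nonneg_right
          · exact_mod_cast hcard
          · positivity
      _ = f A := by field_simp
  linarith
end

section
/- Let f : 2^U → ℝ be a nonnegative monotone submodular function, k ≥ 1 an integer, and A = {a₁, …, a_m} a set listed in order with m > k. Let A' be the last k elements {a_{m-k+1}, …, a_m}, and write A'_i for the first i elements of A'. Suppose for each i with 0 ≤ i < k, f((A \ A') ∪ A'_i ∪ {a'_{i+1}}) - f((A \ A') ∪ A'_i) ≥ f((A \ A') ∪ A'_i)/k. Then f(A) ≤ 2·f(A'). -/
theorem last_k_elements_half {α : Type*} [Fintype α] [DecidableEq α]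
    (f : Finset α → ℝ)
    (hnonneg : ∀ S : Finset α, 0 ≤ f S)
    (hmono : ∀ S T : Finset α, S ⊆ T → f S ≤ f T)
    (hsub : ∀ S T : Finset α, ∀ u : α, S ⊆ T → u ∉ T →
      f (insert u T) - f T ≤ f (insert u S) - f S)
    (m k : ℕ) (hk : 1 ≤ k) (hmk : k < m)
    (a : ℕ → α) (hinj : ∀ i ∈ Finset.range m, ∀ j ∈ Finset.range m, a i = a j → i = j)
    (A A' : Finset α) (hA : A = (Finset.range m).image a)
    (hA' : A' = (Finset.Ico (m - k) m).image a)
    (hgain : ∀ i < k,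
      f (insert (a (m - k + i)) ((A \ A') ∪ (Finset.Ico (m - k) (m - k + i)).image a))
          - f ((A \ A') ∪ (Finset.Ico (m - k) (m - k + i)).image a)
        ≥ f ((A \ A') ∪ (Finset.Ico (m - k) (m - k + i)).image a) / k) :
    f A ≤ 2 * f A' := by
  set B : Finset α := A \ A' with hB
  -- step sets
  set g : ℕ → ℝ := fun i => f (B ∪ (Finset.Ico (m - k) (m - k + i)).image a) with hg
  have hkpos : (0:ℝ) < k := by exact_mod_cast hk
  -- step inequality
  have hstep : ∀ i < k, (1 + 1/(k:ℝ)) * g i ≤ g (i+1) := by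
    intro i hi
    have hset : B ∪ (Finset.Ico (m - k) (m - k + (i+1))).image a
        = insert (a (m - k + i)) (B ∪ (Finset.Ico (m - k) (m - k + i)).image a) := by
      have : Finset.Ico (m - k) (m - k + (i+1))
          = insert (m - k + i) (Finset.Ico (m - k) (m - k + i)) := by
        ext x; simp only [Finset.mem_Ico, Finset.mem_insert]; omega
      rw [this, Finset.image_insert, Finset.union_insert]
    have h := hgain i hi
    have : g i / k ≤ g (i+1) - g i := by
      simpa [hg, hset] using h
    have heq : (1 + 1/(k:ℝ)) * g i = g i + g i / k := by field_simp
    linarith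
  -- g k ≥ (1+1/k)^i * g 0
  have hpow : ∀ i ≤ k, (1 + 1/(k:ℝ))^i * g 0 ≤ g i := by
    intro i hi
    induction i with
    | zero => simp
    | succ n ih =>
      have hn : n ≤ k := Nat.le_of_succ_le hi
      have hnk : n < k := hi
      have h1 := ih hn
      have h2 := hstep n hnk
      have hpos : (0:ℝ) ≤ 1 + 1/(k:ℝ) := by positivity
      calc (1 + 1/(k:ℝ))^(n+1) * g 0 = (1 + 1/(k:ℝ)) * ((1 + 1/(k:ℝ))^n * g 0) := by ring
        _ ≤ (1 + 1/(k:ℝ)) * g n := by nlinarith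
        _ ≤ g (n+1) := h2
  have h2le : (2:ℝ) ≤ (1 + 1/(k:ℝ))^k := by
    have h0 : (0:ℝ) ≤ 1/(k:ℝ) := by positivity
    have := one_add_mul_le_pow (a := 1/(k:ℝ)) (by linarith) k
    have hkk : (k:ℝ) * (1/(k:ℝ)) = 1 := by field_simp
    nlinarith
  -- g 0 = f B, g k = f A
  have hAsub : A' ⊆ A := by
    rw [hA, hA']
    exact Finset.image_subset_image (fun x hx => by
      simp only [Finset.mem_Ico, Finset.mem_range] at *; omega)
  have hg0 : g 0 = f B := by simp [hg]
  have hgk : g k = f A := by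
    have : m - k + k = m := Nat.sub_add_cancel (le_of_lt hmk)
    have hBA : B ∪ A' = A := Finset.sdiff_union_of_subset hAsub
    rw [hg]; simp only [this, ← hA']
    rw [hBA]
  -- f B ≤ f A / 2
  have hfB : 2 * f B ≤ f A := by
    have := hpow k le_rfl
    rw [hg0, hgk] at this
    nlinarith [hnonneg B, this, h2le]
  -- subadditivity: f (B ∪ S) ≤ f B + f S
  have hsubadd : ∀ S : Finset α, f (B ∪ S) ≤ f B + f S := by
    intro S
    induction S using Finset.induction_on with
    | empty => simpa using hnonneg (∅ : Finset α)
    | @insert u S hu ih =>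
      rw [Finset.union_insert]
      by_cases hmem : u ∈ B ∪ S
      · rw [Finset.insert_eq_self.mpr hmem]
        have : f S ≤ f (insert u S) := hmono _ _ (Finset.subset_insert _ _)
        linarith
      · have := hsub S (B ∪ S) u Finset.subset_union_right hmem
        linarith
  have hBA : B ∪ A' = A := Finset.sdiff_union_of_subset hAsub
  have := hsubadd A'
  rw [hBA] at this
  linarith
end

section
/- Let f : 2^U → ℝ be nonnegative, monotone, submodular, let O ⊆ U with |O| ≤ k and OPT = f(O), and let A ⊆ U be such that for every o ∈ O, f(A ∪ {o}) - f(A) ≤ OPT/(4k). Then f(A) ≥ (3/4)·OPT. -/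
/-!
By submodularity, f(A ∪ O) - f(A) is at most the sum of the single-element gains f(A ∪ {o}) - f(A)
over o ∈ O, hence at most |O| · OPT/(4k) ≤ OPT/4, while monotonicity gives f(A ∪ O) ≥ f(O) = OPT.
-/

open Finset

theorem union_sub_le_sum_insert_sub {α β : Type*} [DecidableEq α]
    [AddCommGroup β] [PartialOrder β] [IsOrderedAddMonoid β] (f : Finset α → β)
    (hsub : ∀ S T : Finset α, ∀ u : α, S ⊆ T → u ∉ T →
      f (insert u T) - f T ≤ f (insert u S) - f S)
    (A S : Finset α) : f (A ∪ S) - f A ≤ ∑ o ∈ S, (f (insert o A) - f A) := by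
  induction S using Finset.induction_on with
  | empty => simp
  | insert a S ha ih =>
    rw [sum_insert ha, union_insert]
    by_cases haA : a ∈ A
    · rw [insert_eq_of_mem (mem_union_left S haA), insert_eq_of_mem haA, sub_self, zero_add]
      exact ih
    · have hgain : f (insert a (A ∪ S)) - f (A ∪ S) ≤ f (insert a A) - f A :=
        hsub A (A ∪ S) a subset_union_left (by simp [haA, ha])
      calc f (insert a (A ∪ S)) - f A
          = (f (insert a (A ∪ S)) - f (A ∪ S)) + (f (A ∪ S) - f A) := by abel
        _ ≤ _ := add_le_add hgain ih

theorem natCast_mul_div_mul_le_div {n k : ℕ} (hnk : n ≤ k) {c : ℝ} (hc : 0 ≤ c) {d : ℝ}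
    (hd : 0 ≤ d) : n * (c / (d * k)) ≤ c / d := by
  -- For `k = 0` the quotient is the junk value `c / 0 = 0`, but then `n = 0` too.
  rcases Nat.eq_zero_or_pos k with rfl | hk
  · rw [Nat.le_zero.mp hnk, Nat.cast_zero, zero_mul]
    positivity
  · calc (n : ℝ) * (c / (d * k)) ≤ k * (c / (d * k)) := by gcongr
      _ = c / d := by rw [← div_div, mul_div_cancel₀ _ (by positivity)]

theorem boost_ratio_small_set_general {α : Type*} [DecidableEq α]
    (f : Finset α → ℝ)
    (hnonneg : ∀ S : Finset α, 0 ≤ f S)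
    (hmono : ∀ S T : Finset α, S ⊆ T → f S ≤ f T)
    (hsub : ∀ S T : Finset α, ∀ u : α, S ⊆ T → u ∉ T →
      f (insert u T) - f T ≤ f (insert u S) - f S)
    (k : ℕ) (O A : Finset α) (hO : O.card ≤ k)
    (OPT : ℝ) (hOPT : OPT = f O)
    (hmarg : ∀ o ∈ O, f (insert o A) - f A ≤ OPT / (4 * k)) :
    f A ≥ (3 / 4) * OPT := by
  subst hOPT
  have hgain : f (A ∪ O) - f A ≤ f O / 4 :=
    calc f (A ∪ O) - f A ≤ ∑ o ∈ O, (f (insert o A) - f A) :=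
          union_sub_le_sum_insert_sub f hsub A O
      _ ≤ O.card * (f O / (4 * k)) := by simpa using sum_le_sum hmarg
      _ ≤ f O / 4 := natCast_mul_div_mul_le_div hO (hnonneg O) (by norm_num)
  linarith [hmono O (A ∪ O) subset_union_right]

theorem boost_ratio_small_set {α : Type*} [Fintype α] [DecidableEq α]
    (f : Finset α → ℝ)
    (hnonneg : ∀ S : Finset α, 0 ≤ f S)
    (hmono : ∀ S T : Finset α, S ⊆ T → f S ≤ f T)
    (hsub : ∀ S T : Finset α, ∀ u : α, S ⊆ T → u ∉ T →
      f (insert u T) - f T ≤ f (insert u S) - f S)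
    (k : ℕ) (hk : 1 ≤ k) (O A : Finset α) (hO : O.card ≤ k)
    (OPT : ℝ) (hOPT : OPT = f O)
    (hmarg : ∀ o ∈ O, f (insert o A) - f A ≤ OPT / (4 * k)) :
    f A ≥ (3 / 4) * OPT :=
  boost_ratio_small_set_general f hnonneg hmono hsub k O A hO OPT hOPT hmarg
end
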